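/- arXiv:1808.08991 — 4 statements merged into one kernel-verified Lean document; each statement's English description precedes it below -/
import Mathlib

section
/- Let F : ℝ → ℝ be the distribution function of a real-valued random variable, let t* ∈ ℝ satisfy 0 < F(t*) < 1, and suppose F is differentiable at t* with derivative f(t*) > 0; set ε = f(t*)/F(t*). Let (c_n) and (l_n) be sequences of positive integers with c_n → ∞, l_n → ∞, and l_n · F(t*)^{c_n} → 1. For each n let T^{(n)}_{i,j} (1 ≤ i ≤ c_n, 1 ≤ j ≤ l_n) be i.i.d. real random variables with distribution function F, and let ∨_min^{(n)} = min_j max_i T^{(n)}_{i,j}. Then for every real t, P( c_n · (∨_min^{(n)} − t*) > t ) converges, as n → ∞, to exp(−exp(ε t)). Equivalently, the scaled Min-Max c_n(∨_min^{(n)} − t*) converges in law to −η·G where η = 1/ε = F(t*)/f(t*) and G is a standard Gumbel random variable. -/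
open MeasureTheory ProbabilityTheory Filter Topology

/-!
Put `sₙ = t* + t / cₙ`. The event `cₙ (∨ₘᵢₙ - t*) > t` says that every column has an entry
above `sₙ`; the columns are independent, so it has probability `(1 - F(sₙ)^cₙ)^lₙ`.
Differentiability gives `F(sₙ) / F(t*) = 1 + ε t / cₙ + o(1 / cₙ)`, hence
`(F(sₙ) / F(t*))^cₙ → exp (ε t)`, and with the coupling `lₙ F(sₙ)^cₙ → exp (ε t)`.
Finally `(1 - q)^l → exp (-a)` whenever `l → ∞` and `l q → a`.
-/

namespace ProbabilityTheory

variable {Ω ι κ β : Type*} {mΩ : MeasurableSpace Ω} {mβ : MeasurableSpace β} {P : Measure Ω}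

theorem iIndepFun.curry {X : ι → κ → Ω → β} (hX : ∀ i j, Measurable (X i j))
    (h : iIndepFun (fun p : ι × κ => X p.1 p.2) P) :
    iIndepFun (fun i ω j => X i j ω) P := by
  have := h.isProbabilityMeasure
  have _ (i : ι) (j : κ) : IsProbabilityMeasure (P.map (X i j)) :=
    Measure.isProbabilityMeasure_map (hX i j).aemeasurable
  have hrow : ∀ i, iIndepFun (X i) P := fun i =>
    h.precomp (g := fun j => (i, j)) fun _ _ hj => (Prod.mk.inj hj).2
  have hcurry : (fun ω i j => X i j ω) =
      MeasurableEquiv.curry ι κ β ∘ fun ω (p : ι × κ) => X p.1 p.2 ω := rfl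
  have hlaw := h.map_fun_eq_infinitePi_map fun p : ι × κ => hX p.1 p.2
  rw [iIndepFun_iff_map_fun_eq_infinitePi_map fun i => measurable_pi_lambda _ (hX i), hcurry,
    ← Measure.map_map (MeasurableEquiv.measurable _)
      (measurable_pi_lambda (fun ω (p : ι × κ) => X p.1 p.2 ω) fun p => hX p.1 p.2),
    hlaw,
    Measure.infinitePi_map_curry fun i j => P.map (X i j)]
  congr 1
  funext i
  exact ((hrow i).map_fun_eq_infinitePi_map (hX i)).symm

theorem iIndepFun.probReal_forall_exists_lt [Fintype ι] [Fintype κ] {X : ι → κ → Ω → ℝ}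
    (hX : ∀ i j, Measurable (X i j)) (h : iIndepFun (fun p : ι × κ => X p.1 p.2) P)
    {s q : ℝ} (hq : ∀ i j, P.real {ω | X i j ω ≤ s} = q) :
    P.real {ω | ∀ j, ∃ i, s < X i j ω} = (1 - q ^ Fintype.card ι) ^ Fintype.card κ := by
  have := h.isProbabilityMeasure
  have hcols : iIndepFun (fun j ω i => X i j ω) P :=
    iIndepFun.curry (fun j i => hX i j) (h.precomp Prod.swap_injective)
  have hcol (j : κ) : P.real {ω | ∃ i, s < X i j ω} = 1 - q ^ Fintype.card ι := by
    have hentries : iIndepFun (fun i => X i j) P :=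
      h.precomp (g := fun i => (i, j)) fun _ _ hi => (Prod.mk.inj hi).1
    have hcompl : {ω | ∃ i, s < X i j ω} = (⋂ i, {ω | X i j ω ≤ s})ᶜ := by
      ext; simp
    rw [hcompl, probReal_compl_eq_one_sub (.iInter fun i => measurableSet_le (hX i j)
      measurable_const), measureReal_def,
      hentries.meas_iInter (s := fun i => {ω | X i j ω ≤ s}) fun i =>
        ⟨Set.Iic s, measurableSet_Iic, rfl⟩, ENNReal.toReal_prod]
    simp [← measureReal_def, hq]
  have hinter : {ω | ∀ j, ∃ i, s < X i j ω} = ⋂ j, {ω | ∃ i, s < X i j ω} := by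
    ext; simp
  have hB : MeasurableSet {v : ι → ℝ | ∃ i, s < v i} := by
    simp only [Set.ofPred_exists]
    exact .iUnion fun i => measurableSet_lt measurable_const (measurable_pi_apply i)
  rw [hinter, measureReal_def, hcols.meas_iInter (s := fun j => {ω | ∃ i, s < X i j ω})
    fun j => ⟨_, hB, rfl⟩, ENNReal.toReal_prod]
  simp [← measureReal_def, hcol]

end ProbabilityTheory

theorem Real.tendsto_one_add_pow_exp_of_tendsto_mul {α : Type*} {L : Filter α} {k : α → ℕ}
    {g : α → ℝ} {a : ℝ} (hk : Tendsto k L atTop) (hg : Tendsto (fun x => k x * g x) L (𝓝 a)) :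
    Tendsto (fun x => (1 + g x) ^ k x) L (𝓝 (Real.exp a)) := by
  have hkR : Tendsto (fun x => (k x : ℝ)) L atTop := tendsto_natCast_atTop_atTop.comp hk
  have hg0 : Tendsto g L (𝓝 0) := by
    refine (hg.div_atTop hkR).congr' ?_
    filter_upwards [hkR.eventually_gt_atTop 0] with x hx
    field_simp
  have hderiv : HasDerivAt (fun y => Real.log (1 + y)) 1 0 := by
    simpa using ((hasDerivAt_id (0 : ℝ)).const_add 1).log (by norm_num)
  have hh : Tendsto (fun x => dslope (fun y => Real.log (1 + y)) 0 (g x)) L (𝓝 1) := by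
    have := (continuousAt_dslope_same.2 hderiv.differentiableAt).tendsto.comp hg0
    rwa [dslope_same, hderiv.deriv] at this
  -- `dslope` extends `log (1 + y) / y` continuously to `y = 0`, so no case split on `g x = 0`.
  have hlog (y : ℝ) : y * dslope (fun y => Real.log (1 + y)) 0 y = Real.log (1 + y) := by
    rcases eq_or_ne y 0 with rfl | hy
    · simp
    · rw [dslope_of_ne _ hy, slope_def_field, add_zero, Real.log_one, sub_zero, sub_zero,
        mul_div_cancel₀ _ hy]
  refine ((Real.continuous_exp.tendsto a).comp ((hg.mul hh).trans (by rw [mul_one]))).congr' ?_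
  filter_upwards [hg0.eventually (eventually_gt_nhds (show (-1 : ℝ) < 0 by norm_num))] with x hx
  rw [Function.comp_apply, mul_assoc, hlog, Real.exp_nat_mul, Real.exp_log (by linarith)]

theorem HasDerivAt.tendsto_mul_sub_div {f : ℝ → ℝ} {f' x : ℝ} (hf : HasDerivAt f f' x)
    {α : Type*} {L : Filter α} {c : α → ℝ} (hc : Tendsto c L atTop) (t : ℝ) :
    Tendsto (fun a => c a * (f (x + t / c a) - f x)) L (𝓝 (f' * t)) := by
  have hx : Tendsto (fun a => x + t / c a) L (𝓝 x) := by
    simpa using tendsto_const_nhds.add (tendsto_const_nhds.div_atTop hc)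
  have hslope := ((continuousAt_dslope_same.2 hf.differentiableAt).tendsto.comp hx).mul_const t
  rw [dslope_same, hf.deriv] at hslope
  refine hslope.congr' ?_
  filter_upwards [hc.eventually_gt_atTop 0] with a ha
  rcases eq_or_ne t 0 with rfl | ht
  · simp
  · rw [Function.comp_apply, dslope_of_ne _ (by simp [ht, ha.ne']), slope_def_field,
      add_sub_cancel_left]
    field_simp

theorem HasDerivAt.tendsto_div_pow_exp {F : ℝ → ℝ} {f x : ℝ} (hF : HasDerivAt F f x)
    (hx : F x ≠ 0) {α : Type*} {L : Filter α} {c : α → ℕ} (hc : Tendsto c L atTop) (t : ℝ) :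
    Tendsto (fun a => (F (x + t / c a) / F x) ^ c a) L (𝓝 (Real.exp (f / F x * t))) := by
  have hmul := (hF.div_const (F x)).tendsto_mul_sub_div (tendsto_natCast_atTop_atTop.comp hc) t
  simp only [div_self hx, Function.comp_apply] at hmul
  simpa using Real.tendsto_one_add_pow_exp_of_tendsto_mul hc hmul

theorem lt_mul_inf'_sup'_sub_iff {ι κ : Type*} {sι : Finset ι} {sκ : Finset κ}
    (hι : sι.Nonempty) (hκ : sκ.Nonempty) (f : ι → κ → ℝ) {c : ℝ} (hc : 0 < c) (x t : ℝ) :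
    t < c * (sκ.inf' hκ (fun j => sι.sup' hι (fun i => f i j)) - x) ↔
      ∀ j ∈ sκ, ∃ i ∈ sι, x + t / c < f i j := by
  rw [mul_comm, ← div_lt_iff₀ hc, lt_sub_iff_add_lt', Finset.lt_inf'_iff]
  simp only [Finset.lt_sup'_iff]

theorem minMax_gumbel_limit_general
    {Ω : Type*} [MeasurableSpace Ω] (P : Measure Ω) [IsProbabilityMeasure P]
    (F : ℝ → ℝ) (tstar fstar : ℝ)
    (h0 : 0 < F tstar)
    (hd : HasDerivAt F fstar tstar)
    (c l : ℕ → ℕ) (hcpos : ∀ n, 0 < c n) (hlpos : ∀ n, 0 < l n)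
    (hc : Tendsto c atTop atTop) (hl : Tendsto l atTop atTop)
    (hcouple : Tendsto (fun n => (l n : ℝ) * F tstar ^ c n) atTop (nhds 1))
    (T : (n : ℕ) → Fin (c n) → Fin (l n) → Ω → ℝ)
    (hmeas : ∀ n i j, Measurable (T n i j))
    (hindep : ∀ n, iIndepFun
      (fun p : Fin (c n) × Fin (l n) => T n p.1 p.2) P)
    (hF : ∀ n i j t, (P {ω | T n i j ω ≤ t}).toReal = F t)
    (t : ℝ) :
    Tendsto
      (fun n => (P {ω | t < (c n : ℝ) *
          ((Finset.univ.inf' (Finset.univ_nonempty_iff.mpr (Fin.pos_iff_nonempty.mp (hlpos n)))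
              fun j => Finset.univ.sup'
                (Finset.univ_nonempty_iff.mpr (Fin.pos_iff_nonempty.mp (hcpos n)))
                fun i => T n i j ω) - tstar)}).toReal)
      atTop
      (nhds (Real.exp (-Real.exp ((fstar / F tstar) * t)))) := by
  have hlimit : Tendsto (fun n => (l n : ℝ) * F (tstar + t / c n) ^ c n) atTop
      (𝓝 (Real.exp (fstar / F tstar * t))) := by
    have := hcouple.mul (hd.tendsto_div_pow_exp h0.ne' hc t)
    rw [one_mul] at this
    refine this.congr fun n => ?_
    rw [div_pow, mul_assoc, mul_div_cancel₀ _ (pow_ne_zero _ h0.ne')]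
  have hgumbel := Real.tendsto_one_add_pow_exp_of_tendsto_mul hl
    (g := fun n => -F (tstar + t / c n) ^ c n) (by simpa only [mul_neg] using hlimit.neg)
  refine hgumbel.congr fun n => ?_
  simp_rw [← measureReal_def, lt_mul_inf'_sup'_sub_iff _ _ _ (Nat.cast_pos.2 (hcpos n)),
    Finset.mem_univ, true_implies, true_and]
  rw [(hindep n).probReal_forall_exists_lt (hmeas n) fun i j => hF n i j _]
  simp [sub_eq_add_neg]

/-- Gumbel limit-law for the Min-Max: for `cₙ × lₙ` matrices of i.i.d. entries
with distribution function `F` differentiable at `t*` (with `0 < F t* < 1` and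
density value `f t* > 0`), under the geometric coupling `lₙ (F t*)^{cₙ} → 1`,
the scaled Min-Max `cₙ (∨ₘᵢₙ - t*)` converges in law to `-η ⬝ G`, `G` standard
Gumbel: `P(cₙ (∨ₘᵢₙ - t*) > t) → exp (-exp (ε t))` with `ε = f t*/F t*`. -/
theorem minMax_gumbel_limit
    {Ω : Type*} [MeasurableSpace Ω] (P : Measure Ω) [IsProbabilityMeasure P]
    (F : ℝ → ℝ) (tstar fstar : ℝ)
    (h0 : 0 < F tstar) (h1 : F tstar < 1) (hf : 0 < fstar)
    (hd : HasDerivAt F fstar tstar)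
    (c l : ℕ → ℕ) (hcpos : ∀ n, 0 < c n) (hlpos : ∀ n, 0 < l n)
    (hc : Tendsto c atTop atTop) (hl : Tendsto l atTop atTop)
    (hcouple : Tendsto (fun n => (l n : ℝ) * F tstar ^ c n) atTop (nhds 1))
    (T : (n : ℕ) → Fin (c n) → Fin (l n) → Ω → ℝ)
    (hmeas : ∀ n i j, Measurable (T n i j))
    (hindep : ∀ n, iIndepFun
      (fun p : Fin (c n) × Fin (l n) => T n p.1 p.2) P)
    (hF : ∀ n i j t, (P {ω | T n i j ω ≤ t}).toReal = F t)
    (t : ℝ) :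
    Tendsto
      (fun n => (P {ω | t < (c n : ℝ) *
          ((Finset.univ.inf' (Finset.univ_nonempty_iff.mpr (Fin.pos_iff_nonempty.mp (hlpos n)))
              fun j => Finset.univ.sup'
                (Finset.univ_nonempty_iff.mpr (Fin.pos_iff_nonempty.mp (hcpos n)))
                fun i => T n i j ω) - tstar)}).toReal)
      atTop
      (nhds (Real.exp (-Real.exp ((fstar / F tstar) * t)))) :=
  minMax_gumbel_limit_general P F tstar fstar h0 hd c l hcpos hlpos hc hl hcouple T hmeas hindep hF
    t
end

section
/- Let F : ℝ → ℝ and t* ∈ ℝ be such that 0 < F(t*) < 1 and F is differentiable at t* with derivative f(t*) > 0; set F̄ = 1 − F and ε̄ = f(t*)/F̄(t*). Let (c_n) and (l_n) be sequences of positive integers with c_n → ∞, l_n → ∞, and c_n · F̄(t*)^{l_n} → 1. Then for all real a < b, c_n · ( F̄(t* + a/l_n)^{l_n} − F̄(t* + b/l_n)^{l_n} ) converges, as n → ∞, to exp(−ε̄ a) − exp(−ε̄ b), which equals ∫_a^b ε̄ exp(−ε̄ x) dx. (This is the convergence of the expected number of scaled row minima l_n(∧_i − t*) falling in the interval (a,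 b] to the mean measure of the Poisson process with intensity λ(x) = ε̄ exp(−ε̄ x).) -/
/-!
With `G = 1 - F`, factor `c G(t* + x/l)^l = (c G(t*)^l) · (G(t* + x/l) / G(t*))^l`. The first
factor tends to `1` by the coupling, and the second is `(1 + yₗ)^l` with
`l yₗ → G'(t*) x / G(t*) = -ε̄ x` by differentiability of `G` at `t*`, so it tends to `exp (-ε̄ x)`.
Subtracting the cases `x = a` and `x = b` gives the limit; the integral is the fundamental theorem
of calculus for `exp` after the substitution `u = -ε̄ x`.
-/

open Filter Topology

theorem HasDerivAt.tendsto_mul_sub_div_atTop {f : ℝ → ℝ} {f' t : ℝ} (hf : HasDerivAt f f' t)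
    (x : ℝ) : Tendsto (fun y => y * (f (t + x / y) - f t)) atTop (𝓝 (f' * x)) := by
  rcases eq_or_ne x 0 with rfl | hx
  · simp
  have hstep : Tendsto (fun y : ℝ => x / y) atTop (𝓝[≠] 0) :=
    tendsto_nhdsWithin_of_tendsto_nhds_of_eventually_within _
      (tendsto_const_nhds.div_atTop tendsto_id)
      (by filter_upwards [eventually_ne_atTop 0] with y hy using div_ne_zero hx hy)
  rw [mul_comm f']
  refine ((hf.tendsto_slope_zero.comp hstep).const_mul x).congr' ?_
  filter_upwards [eventually_ne_atTop 0] with y hy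
  simp only [Function.comp_apply, smul_eq_mul]
  field_simp

theorem HasDerivAt.tendsto_div_pow_exp_s6 {G : ℝ → ℝ} {G' t : ℝ} (hG : HasDerivAt G G' t)
    (ht : G t ≠ 0) (x : ℝ) :
    Tendsto (fun m : ℕ => (G (t + x / m) / G t) ^ m) atTop (𝓝 (Real.exp (G' / G t * x))) := by
  refine (Real.tendsto_one_add_pow_exp_of_tendsto (g := fun m : ℕ => G (t + x / m) / G t - 1) ?_).congr
    fun m => by simp
  have h := ((hG.tendsto_mul_sub_div_atTop x).comp tendsto_natCast_atTop_atTop).div_const (G t)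
  rw [div_mul_eq_mul_div]
  refine h.congr fun m => ?_
  simp only [Function.comp_apply]
  field_simp

theorem HasDerivAt.tendsto_mul_pow_exp {G : ℝ → ℝ} {G' t L : ℝ} (hG : HasDerivAt G G' t)
    (ht : G t ≠ 0) (x : ℝ) {c l : ℕ → ℕ} (hl : Tendsto l atTop atTop)
    (hcouple : Tendsto (fun n => (c n : ℝ) * G t ^ l n) atTop (𝓝 L)) :
    Tendsto (fun n => (c n : ℝ) * G (t + x / l n) ^ l n) atTop
      (𝓝 (L * Real.exp (G' / G t * x))) := by
  refine (hcouple.mul ((hG.tendsto_div_pow_exp_s6 ht x).comp hl)).congr fun n => ?_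
  simp only [Function.comp_apply, div_pow]
  field_simp

theorem integral_mul_exp_neg_mul (e a b : ℝ) :
    ∫ x in a..b, e * Real.exp (-e * x) = Real.exp (-e * a) - Real.exp (-e * b) := by
  have h := intervalIntegral.smul_integral_comp_mul_left Real.exp (-e) (a := a) (b := b)
  rw [integral_exp, smul_eq_mul] at h
  rw [intervalIntegral.integral_const_mul]
  linarith

theorem expected_scaled_row_minima_in_interval_general
    (F : ℝ → ℝ) (tstar fstar : ℝ)
    (h1 : F tstar < 1)
    (hd : HasDerivAt F fstar tstar)
    (c l : ℕ → ℕ)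
    (hl : Tendsto l atTop atTop)
    (hcouple : Tendsto (fun n => (c n : ℝ) * (1 - F tstar) ^ l n) atTop (nhds 1))
    (a b : ℝ) :
    Tendsto (fun n => (c n : ℝ) *
        ((1 - F (tstar + a / l n)) ^ l n - (1 - F (tstar + b / l n)) ^ l n))
      atTop
      (nhds (Real.exp (-(fstar / (1 - F tstar)) * a) -
        Real.exp (-(fstar / (1 - F tstar)) * b))) ∧
    Real.exp (-(fstar / (1 - F tstar)) * a) - Real.exp (-(fstar / (1 - F tstar)) * b)
      = ∫ x in a..b, (fstar / (1 - F tstar)) * Real.exp (-(fstar / (1 - F tstar)) * x) := by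
  have hsurv : HasDerivAt (fun s => 1 - F s) (-fstar) tstar := hd.const_sub 1
  have hpos : 1 - F tstar ≠ 0 := by linarith
  have hmin (x : ℝ) := hsurv.tendsto_mul_pow_exp hpos x hl hcouple
  simp only [one_mul, neg_div] at hmin
  refine ⟨((hmin a).sub (hmin b)).congr fun n => by ring, ?_⟩
  rw [integral_mul_exp_neg_mul]

/-- Convergence of the expected number of scaled row minima in an interval
`(a, b]` to the mean measure of the Poisson process with intensity
`λ(x) = ε̄ exp (-ε̄ x)`, where `ε̄ = F' t* / (1 - F t*)`: under the geometric
coupling `cₙ (1 - F t*)^{lₙ} → 1`,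
`cₙ ((1 - F (t* + a/lₙ))^{lₙ} - (1 - F (t* + b/lₙ))^{lₙ}) → exp (-ε̄ a) - exp (-ε̄ b)`,
and this limit equals `∫_a^b ε̄ exp (-ε̄ x) dx`. -/
theorem expected_scaled_row_minima_in_interval
    (F : ℝ → ℝ) (tstar fstar : ℝ)
    (h0 : 0 < F tstar) (h1 : F tstar < 1) (hf : 0 < fstar)
    (hd : HasDerivAt F fstar tstar)
    (c l : ℕ → ℕ) (hcpos : ∀ n, 0 < c n) (hlpos : ∀ n, 0 < l n)
    (hc : Tendsto c atTop atTop) (hl : Tendsto l atTop atTop)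
    (hcouple : Tendsto (fun n => (c n : ℝ) * (1 - F tstar) ^ l n) atTop (nhds 1))
    (a b : ℝ) (hab : a < b) :
    Tendsto (fun n => (c n : ℝ) *
        ((1 - F (tstar + a / l n)) ^ l n - (1 - F (tstar + b / l n)) ^ l n))
      atTop
      (nhds (Real.exp (-(fstar / (1 - F tstar)) * a) -
        Real.exp (-(fstar / (1 - F tstar)) * b))) ∧
    Real.exp (-(fstar / (1 - F tstar)) * a) - Real.exp (-(fstar / (1 - F tstar)) * b)
      = ∫ x in a..b, (fstar / (1 - F tstar)) * Real.exp (-(fstar / (1 - F tstar)) * x) :=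
  expected_scaled_row_minima_in_interval_general F tstar fstar h1 hd c l hl hcouple a b
end

section
/- Let F : ℝ → ℝ and t* ∈ ℝ be such that 0 < F(t*) < 1 and F is differentiable at t* with derivative f(t*) > 0; set ε = f(t*)/F(t*). Let (c_n) and (l_n) be sequences of positive integers with c_n → ∞, l_n → ∞, and l_n · F(t*)^{c_n} → 1. Then for all real a < b, l_n · ( F(t* + b/c_n)^{c_n} − F(t* + a/c_n)^{c_n} ) converges, as n → ∞, to exp(ε b) − exp(ε a), which equals ∫_a^b ε exp(ε x) dx. (This is the convergence of the expected number of scaled column maxima c_n(∨_j − t*) falling in the interval (a, b] to the mean measure of the Poisson process with intensity λ(x) = ε exp(ε x).) -/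
open Filter

/-- The "log(1+x)/x" function extended by 1 at 0. -/
noncomputable def logRatio (x : ℝ) : ℝ := if x = 0 then 1 else Real.log (1 + x) / x

lemma logRatio_tendsto : Tendsto logRatio (nhds 0) (nhds 1) := by
  have hderiv : HasDerivAt (fun x : ℝ => Real.log (1 + x)) 1 0 := by
    have h1 : HasDerivAt (fun x : ℝ => 1 + x) 1 0 := by
      simpa using (hasDerivAt_id (0:ℝ)).const_add 1
    have h2 := (Real.hasDerivAt_log (by norm_num : (1:ℝ) + 0 ≠ 0)).comp 0 h1
    exact h2.congr_deriv (by norm_num)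
  have hslope : Tendsto (fun x : ℝ => Real.log (1 + x) / x) (nhdsWithin 0 {(0:ℝ)}ᶜ)
      (nhds 1) := by
    have := (hasDerivAt_iff_tendsto_slope).1 hderiv
    refine this.congr' ?_
    filter_upwards [self_mem_nhdsWithin] with x hx
    simp [slope_def_field, div_eq_div_iff]
  have hpunct : Tendsto logRatio (nhdsWithin 0 {(0:ℝ)}ᶜ) (nhds 1) := by
    refine hslope.congr' ?_
    filter_upwards [self_mem_nhdsWithin] with x hx
    simp [logRatio, show x ≠ 0 from hx]
  have hpure : Tendsto logRatio (pure (0:ℝ)) (nhds 1) := by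
    have := tendsto_pure_nhds logRatio 0
    simpa [logRatio] using this
  have hsup : nhdsWithin (0:ℝ) {(0:ℝ)}ᶜ ⊔ pure 0 = nhds 0 :=
    nhdsNE_sup_pure 0
  rw [← hsup]
  exact tendsto_sup.2 ⟨hpunct, hpure⟩

/-- If `cₙ → ∞` and `cₙ (uₙ - 1) → t`, then `uₙ ^ cₙ → exp t`. -/
lemma pow_tendsto_exp (c : ℕ → ℕ) (hcpos : ∀ n, 0 < c n)
    (hc : Tendsto c atTop atTop) (u : ℕ → ℝ) (t : ℝ)
    (h : Tendsto (fun n => (c n : ℝ) * (u n - 1)) atTop (nhds t)) :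
    Tendsto (fun n => u n ^ c n) atTop (nhds (Real.exp t)) := by
  have hcinv : Tendsto (fun n => ((c n : ℝ))⁻¹) atTop (nhds 0) :=
    tendsto_inv_atTop_zero.comp (tendsto_natCast_atTop_atTop.comp hc)
  have hu1 : Tendsto (fun n => u n - 1) atTop (nhds 0) := by
    have := h.mul hcinv
    rw [mul_zero] at this
    refine this.congr fun n => ?_
    have : (c n : ℝ) ≠ 0 := Nat.cast_ne_zero.2 (hcpos n).ne'
    field_simp
  have hlog : Tendsto (fun n => (c n : ℝ) * Real.log (u n)) atTop (nhds t) := by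
    have hg : Tendsto (fun n => logRatio (u n - 1)) atTop (nhds 1) :=
      logRatio_tendsto.comp hu1
    have := h.mul hg
    rw [mul_one] at this
    refine this.congr fun n => ?_
    by_cases hz : u n - 1 = 0
    · have : u n = 1 := by linarith
      simp [logRatio, hz, this]
    · have h1u : 1 + (u n - 1) = u n := by ring
      simp only [logRatio, hz, if_neg, if_false, h1u]
      field_simp
  have hupos : ∀ᶠ n in atTop, 0 < u n := by
    have : Tendsto u atTop (nhds 1) := by
      have : Tendsto (fun n => (u n - 1) + 1) atTop (nhds (0 + 1)) :=
        hu1.add tendsto_const_nhds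
      simpa using this
    exact this.eventually (eventually_gt_nhds one_pos)
  have hexp : Tendsto (fun n => Real.exp ((c n : ℝ) * Real.log (u n))) atTop
      (nhds (Real.exp t)) := (Real.continuous_exp.tendsto t).comp hlog
  refine hexp.congr' ?_
  filter_upwards [hupos] with n hn
  rw [Real.exp_nat_mul, Real.exp_log hn]

/-- Convergence of the expected number of scaled column maxima in an interval
`(a, b]` to the mean measure of the Poisson process with intensity
`λ(x) = ε exp (ε x)`, where `ε = F' t* / F t*`: under the geometric coupling
`lₙ (F t*)^{cₙ} → 1`,
`lₙ (F (t* + b/cₙ)^{cₙ} - F (t* + a/cₙ)^{cₙ}) → exp (ε b) - exp (ε a)`,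
and this limit equals `∫_a^b ε exp (ε x) dx`. -/
theorem expected_scaled_column_maxima_in_interval
    (F : ℝ → ℝ) (tstar fstar : ℝ)
    (h0 : 0 < F tstar) (h1 : F tstar < 1) (hf : 0 < fstar)
    (hd : HasDerivAt F fstar tstar)
    (c l : ℕ → ℕ) (hcpos : ∀ n, 0 < c n) (hlpos : ∀ n, 0 < l n)
    (hc : Tendsto c atTop atTop) (hl : Tendsto l atTop atTop)
    (hcouple : Tendsto (fun n => (l n : ℝ) * F tstar ^ c n) atTop (nhds 1))
    (a b : ℝ) (hab : a < b) :
    Tendsto (fun n => (l n : ℝ) *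
        (F (tstar + b / c n) ^ c n - F (tstar + a / c n) ^ c n))
      atTop
      (nhds (Real.exp ((fstar / F tstar) * b) - Real.exp ((fstar / F tstar) * a))) ∧
    Real.exp ((fstar / F tstar) * b) - Real.exp ((fstar / F tstar) * a)
      = ∫ x in a..b, (fstar / F tstar) * Real.exp ((fstar / F tstar) * x) := by
  set ε := fstar / F tstar with hε
  have hεpos : 0 < ε := div_pos hf h0
  -- main convergence for a single point x
  have main : ∀ x : ℝ, Tendsto (fun n => (l n : ℝ) * F (tstar + x / c n) ^ c n)
      atTop (nhds (Real.exp (ε * x))) := by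
    intro x
    have hkey : Tendsto (fun n => (c n : ℝ) * (F (tstar + x / c n) / F tstar - 1))
        atTop (nhds (ε * x)) := by
      rcases eq_or_ne x 0 with rfl | hx
      · have : ∀ n, (c n : ℝ) * (F (tstar + 0 / c n) / F tstar - 1) = 0 := by
          intro n
          simp [div_self h0.ne']
        rw [show ε * 0 = 0 by ring]
        exact Tendsto.congr (fun n => (this n).symm) tendsto_const_nhds
      · have hslope := (hasDerivAt_iff_tendsto_slope).1 hd
        have hcomp : Tendsto (fun n => tstar + x / c n) atTop
            (nhdsWithin tstar {tstar}ᶜ) := by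
          have hxc : Tendsto (fun n => x / (c n : ℝ)) atTop (nhds 0) := by
            exact Tendsto.div_atTop tendsto_const_nhds
              (tendsto_natCast_atTop_atTop.comp hc)
          refine tendsto_nhdsWithin_iff.2 ⟨?_, ?_⟩
          · have := hxc.const_add tstar
            simpa using this
          · filter_upwards [eventually_ge_atTop 0] with n _
            have hcn : (c n : ℝ) ≠ 0 := Nat.cast_ne_zero.2 (hcpos n).ne'
            simp only [Set.mem_compl_iff, Set.mem_singleton_iff]
            intro hcontra
            have : x / (c n : ℝ) = 0 := by linarith
            exact hx (by field_simp at this; simpa using this)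
        have hslope' := hslope.comp hcomp
        -- slope F tstar (tstar + x/cn) = (F (tstar + x/cn) - F tstar) / (x/cn)
        have heq : ∀ n, (c n : ℝ) * (F (tstar + x / c n) / F tstar - 1)
            = (slope F tstar (tstar + x / c n) * x) / F tstar := by
          intro n
          have hcn : (c n : ℝ) ≠ 0 := Nat.cast_ne_zero.2 (hcpos n).ne'
          rw [slope_def_field]
          generalize F (tstar + x / c n) = A
          have h2 : tstar + x / (c n : ℝ) - tstar = x / c n := by ring
          rw [h2]
          field_simp
        have : Tendsto (fun n => (slope F tstar (tstar + x / c n) * x) / F tstar)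
            atTop (nhds (fstar * x / F tstar)) := by
          exact ((hslope'.mul_const x).div_const (F tstar))
        rw [show ε * x = fstar * x / F tstar by rw [hε]; ring]
        exact Tendsto.congr (fun n => (heq n).symm) this
    have hpow : Tendsto (fun n => (F (tstar + x / c n) / F tstar) ^ c n)
        atTop (nhds (Real.exp (ε * x))) :=
      pow_tendsto_exp c hcpos hc _ _ hkey
    have := hcouple.mul hpow
    rw [one_mul] at this
    refine this.congr fun n => ?_
    have hFc : (F tstar : ℝ) ^ c n ≠ 0 := pow_ne_zero _ h0.ne'
    rw [div_pow]
    field_simp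
  constructor
  · have := (main b).sub (main a)
    refine this.congr fun n => ?_
    ring
  · have hderiv : ∀ x ∈ Set.uIcc a b,
        HasDerivAt (fun y => Real.exp (ε * y)) (ε * Real.exp (ε * x)) x := by
      intro x _
      have h1 : HasDerivAt (fun y : ℝ => ε * y) ε x := by
        simpa using (hasDerivAt_id x).const_mul ε
      have h2 := (Real.hasDerivAt_exp (ε * x)).comp x h1
      have h3 : HasDerivAt (fun y => Real.exp (ε * y)) (Real.exp (ε * x) * ε) x := h2
      simpa [mul_comm] using h3
    have hint : IntervalIntegrable (fun x => ε * Real.exp (ε * x))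
        MeasureTheory.volume a b := by
      apply Continuous.intervalIntegrable
      continuity
    rw [intervalIntegral.integral_eq_sub_of_hasDerivAt hderiv hint]
end

section
/- Let F, t*, f(t*), F̄, ε̄ be as follows: 0 < F(t*) < 1, F differentiable at t* with derivative f(t*) > 0, F̄ = 1 − F, ε̄ = f(t*)/F̄(t*). Let (c_n), (l_n) be positive integers with c_n → ∞, l_n → ∞, c_n·F̄(t*)^{l_n} → 1. For each n let T^{(n)}_{i,j} (1 ≤ i ≤ c_n, 1 ≤ j ≤ l_n) be i.i.d. with distribution function F, and fix a real t. Let N_n be the number of row indices i ≤ c_n such that min_{1≤j≤l_n} T^{(n)}_{i,j} > t* + t/l_n. Then for every nonnegative integer k, P(N_n = k) converges, as n → ∞, to e^{−λ} λ^k / k! where λ = exp(−ε̄ t). (The number of scaled row minima exceeding the level t converges in distribution to a Poisson random variable with mean exp(−ε̄ t).) -/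
/-!
The event that row `i` has its minimum above `sₙ = t* + t/lₙ` is the intersection of the `lₙ`
independent events `{T i j > sₙ}`, so these row events are independent across rows, each of
probability `pₙ = F̄(sₙ)^lₙ`, and `Nₙ` is binomial with parameters `cₙ, pₙ`. Since `F̄` is
differentiable at `t*`, `lₙ (F̄(sₙ)/F̄(t*) - 1) → -f(t*) t / F̄(t*)`, hence
`(F̄(sₙ)/F̄(t*))^lₙ → exp(-ε̄ t)` and, by the coupling, `cₙ pₙ → exp(-ε̄ t)`. The binomial law
then converges to the Poisson law of that mean.
-/

open MeasureTheory ProbabilityTheory Filter Topology Asymptotics unitInterval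

section Limits

variable {α : Type*} {L : Filter α}

lemma tendsto_zero_of_tendsto_natCast_mul {m : α → ℕ} {g : α → ℝ} {r : ℝ}
    (hm : Tendsto m L atTop) (hr : Tendsto (fun a ↦ m a * g a) L (𝓝 r)) :
    Tendsto g L (𝓝 0) := by
  have h := hr.mul (tendsto_natCast_atTop_atTop.comp hm).inv_tendsto_atTop
  rw [mul_zero] at h
  refine h.congr' ?_
  filter_upwards [hm.eventually_ge_atTop 1] with a ha
  have : (m a : ℝ) ≠ 0 := by positivity
  simp [field]

lemma Real.isEquivalent_log_one_add : (fun u : ℝ ↦ Real.log (1 + u)) ~[𝓝 0] id := by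
  have hd : HasDerivAt (fun u : ℝ ↦ Real.log (1 + u)) 1 0 := by
    simpa using ((hasDerivAt_id (0 : ℝ)).const_add 1).log (by norm_num)
  exact hd.isLittleO.congr (fun u ↦ by simp) (fun u ↦ by simp)

lemma tendsto_one_add_pow_exp_of_tendsto_natCast_mul {m : α → ℕ} {g : α → ℝ} {t : ℝ}
    (hm : Tendsto m L atTop) (hg : Tendsto (fun a ↦ m a * g a) L (𝓝 t)) :
    Tendsto (fun a ↦ (1 + g a) ^ m a) L (𝓝 (Real.exp t)) := by
  have hg0 := tendsto_zero_of_tendsto_natCast_mul hm hg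
  have hlog : Tendsto (fun a ↦ m a * Real.log (1 + g a)) L (𝓝 t) :=
    (IsEquivalent.refl.mul (Real.isEquivalent_log_one_add.comp_tendsto hg0)).symm.tendsto_nhds hg
  refine ((Real.continuous_exp.tendsto t).comp hlog).congr' ?_
  filter_upwards [hg0.eventually (eventually_gt_nhds (by norm_num : (-1 : ℝ) < 0))] with a ha
  rw [Function.comp_apply, ← Real.log_pow, Real.exp_log (pow_pos (by linarith) _)]

theorem tendsto_choose_mul_pow_of_tendsto_natCast_mul (k : ℕ) {m : α → ℕ} {p : α → ℝ} {r : ℝ}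
    (hm : Tendsto m L atTop) (hr : Tendsto (fun a ↦ m a * p a) L (𝓝 r)) :
    Tendsto (fun a ↦ (m a).choose k * p a ^ k * (1 - p a) ^ (m a - k)) L
      (𝓝 (Real.exp (-r) * r ^ k / k.factorial)) := by
  have hp0 := tendsto_zero_of_tendsto_natCast_mul hm hr
  have hchoose : Tendsto (fun a ↦ (m a).choose k * p a ^ k) L (𝓝 (r ^ k / k.factorial)) := by
    have : (fun a ↦ ((m a).choose k : ℝ) * p a ^ k) ~[L] fun a ↦ (m a * p a) ^ k / k.factorial :=
      (((isEquivalent_choose k).comp_tendsto hm).mul IsEquivalent.refl).trans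
        (EventuallyEq.isEquivalent <| .of_eq <| by
          ext; simp only [Pi.mul_apply, Function.comp_apply]; field)
    exact this.symm.tendsto_nhds ((hr.pow k).div_const _)
  have hsurv : Tendsto (fun a ↦ (1 - p a) ^ (m a - k)) L (𝓝 (Real.exp (-r))) := by
    have hm' : Tendsto (fun a ↦ m a * -p a) L (𝓝 (-r)) := by simpa using hr.neg
    have h := (tendsto_one_add_pow_exp_of_tendsto_natCast_mul hm hm').div
      ((tendsto_const_nhds.sub hp0).pow k) (by norm_num : ((1 : ℝ) - 0) ^ k ≠ 0)
    simp only [sub_zero, one_pow, div_one, ← sub_eq_add_neg] at h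
    refine h.congr' ?_
    filter_upwards [hm.eventually_ge_atTop k, hp0.eventually (eventually_lt_nhds one_pos)]
      with a hk hp
    rw [Pi.div_apply, pow_sub₀ _ (by linarith) hk, div_eq_mul_inv]
  simpa [mul_div_right_comm, mul_comm] using hchoose.mul hsurv

lemma HasDerivAt.tendsto_natCast_mul_sub {G : ℝ → ℝ} {g₀ x₀ : ℝ} (hd : HasDerivAt G g₀ x₀)
    {l : α → ℕ} (hl : Tendsto l L atTop) (t : ℝ) :
    Tendsto (fun a ↦ (l a : ℝ) * (G (x₀ + t / l a) - G x₀)) L (𝓝 (g₀ * t)) := by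
  have hscaled : HasDerivAt (fun h ↦ G (x₀ + t * h)) (g₀ * t) 0 := by
    have hlin : HasDerivAt (fun h : ℝ ↦ x₀ + t * h) t 0 := by
      simpa using ((hasDerivAt_id (0 : ℝ)).const_mul t).const_add x₀
    exact (by simpa using hd : HasDerivAt G g₀ (x₀ + t * 0)).comp 0 hlin
  have hinv : Tendsto (fun a ↦ (l a : ℝ)⁻¹) L (𝓝[≠] 0) :=
    (tendsto_inv_atTop_nhdsGT_zero.comp (tendsto_natCast_atTop_atTop.comp hl)).mono_right
      (nhdsWithin_mono _ fun _ hx ↦ ne_of_gt hx)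
  refine ((hasDerivAt_iff_tendsto_slope_zero.mp hscaled).comp hinv).congr fun a ↦ ?_
  simp [div_eq_mul_inv]

lemma HasDerivAt.tendsto_div_pow_exp_s8 {G : ℝ → ℝ} {g₀ x₀ : ℝ} (hd : HasDerivAt G g₀ x₀)
    (hG : G x₀ ≠ 0) {l : α → ℕ} (hl : Tendsto l L atTop) (t : ℝ) :
    Tendsto (fun a ↦ (G (x₀ + t / l a) / G x₀) ^ l a) L (𝓝 (Real.exp (g₀ / G x₀ * t))) := by
  have h : Tendsto (fun a ↦ l a * ((G (x₀ + t / l a) - G x₀) / G x₀)) L (𝓝 (g₀ / G x₀ * t)) := by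
    simpa [mul_div_assoc, div_mul_eq_mul_div, mul_div_right_comm]
      using (hd.tendsto_natCast_mul_sub hl t).div_const (G x₀)
  refine (tendsto_one_add_pow_exp_of_tendsto_natCast_mul hl h).congr fun a ↦ ?_
  rw [sub_div, div_self hG, add_sub_cancel]

end Limits

namespace ProbabilityTheory

variable {Ω ι κ β : Type*} [MeasurableSpace Ω] {P : Measure Ω}

lemma iIndepSet.isSetBernoulli [Countable ι] [IsProbabilityMeasure P] {A : ι → Set Ω}
    (hA : ∀ i, MeasurableSet (A i)) (hind : iIndepSet A P) {p : I} (hp : ∀ i, P.real (A i) = p) :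
    IsSetBernoulli (fun ω ↦ {i | ω ∈ A i}) Set.univ p P := by
  have hmeas : ∀ i, Measurable (fun ω ↦ ω ∈ A i) := fun i ↦ measurableSet_setOfPred.mp (hA i)
  have hlaw : ∀ i, P.map (fun ω ↦ ω ∈ A i) =
      toNNReal p • Measure.dirac (i ∈ Set.univ) + toNNReal (σ p) • Measure.dirac False := by
    refine fun i ↦ Measure.ext_iff_singleton.2 fun a ↦ ?_
    rw [Measure.map_apply (hmeas i) (measurableSet_singleton a)]
    have hPA : P (A i) = toNNReal p := by
      rw [← ofReal_measureReal, hp, ← coe_toNNReal p, ENNReal.ofReal_coe_nnreal]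
    by_cases ha : a
    · simp [eq_true ha, hPA]
    · have hpre : (fun ω ↦ ω ∈ A i) ⁻¹' {a} = (A i)ᶜ := by ext; simp [eq_false ha]
      have hcompl : P (A i)ᶜ = toNNReal (σ p) := by
        rw [prob_compl_eq_one_sub (hA i), hPA, ← ENNReal.coe_one, ← toNNReal_add_toNNReal_symm p,
          ENNReal.coe_add, ENNReal.add_sub_cancel_left ENNReal.coe_ne_top]
      rw [hpre, hcompl]
      simp [eq_false ha]
  have hindep : iIndepFun (fun i ω ↦ ω ∈ A i) P :=
    (iIndepFun_iff_iIndep _ _ _).2 hind.iIndep_comap_mem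
  have hY : Measurable fun ω i ↦ ω ∈ A i := measurable_pi_lambda _ hmeas
  refine ⟨(measurable_setOfPred.comp hY).aemeasurable, ?_⟩
  rw [setBernoulli_eq_map, ← funext hlaw,
    ← (iIndepFun_iff_map_fun_eq_infinitePi_map hmeas).1 hindep,
    Measure.map_map measurable_setOfPred hY]
  rfl

lemma iIndepSet.measureReal_ncard_eq [Finite ι] [IsProbabilityMeasure P] {A : ι → Set Ω}
    (hA : ∀ i, MeasurableSet (A i)) (hind : iIndepSet A P) {p : I} (hp : ∀ i, P.real (A i) = p)
    (k : ℕ) :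
    P.real {ω | {i | ω ∈ A i}.ncard = k} =
      (Nat.card ι).choose k * p ^ k * (1 - p) ^ (Nat.card ι - k) := by
  have hX := hind.isSetBernoulli hA hp
  rw [← Set.ncard_univ, ← map_ncard_setBernoulli_real_singleton Set.finite_univ, ← hX.map_eq,
    measureReal_def, measureReal_def, Measure.map_apply (by fun_prop) (measurableSet_singleton _),
    Measure.map_apply_of_aemeasurable hX.aemeasurable .of_discrete]
  rfl

variable [MeasurableSpace β] [Fintype κ] {X : ι → κ → Ω → β}

lemma iIndepFun.measure_biInter_iInter_preimage (hX : iIndepFun (fun q : ι × κ ↦ X q.1 q.2) P)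
    {B : Set β} (hB : MeasurableSet B) (S : Finset ι) :
    P (⋂ i ∈ S, ⋂ j, X i j ⁻¹' B) = ∏ i ∈ S, ∏ j, P (X i j ⁻¹' B) := by
  have hrect : ⋂ i ∈ S, ⋂ j, X i j ⁻¹' B = ⋂ q ∈ S ×ˢ Finset.univ, X q.1 q.2 ⁻¹' B := by
    ext ω
    simp only [Set.mem_iInter, Finset.mem_product, Finset.mem_univ, and_true, Prod.forall]
    exact ⟨fun h i j hi ↦ h i hi j, fun h i hi j ↦ h i j hi⟩
  rw [hrect, hX.meas_biInter fun q _ ↦ ⟨B, hB, rfl⟩, Finset.prod_product]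

lemma iIndepFun.measure_iInter_preimage (hX : iIndepFun (fun q : ι × κ ↦ X q.1 q.2) P)
    {B : Set β} (hB : MeasurableSet B) (i : ι) :
    P (⋂ j, X i j ⁻¹' B) = ∏ j, P (X i j ⁻¹' B) := by
  simpa using hX.measure_biInter_iInter_preimage hB {i}

lemma iIndepFun.iIndepSet_iInter_preimage (hX : iIndepFun (fun q : ι × κ ↦ X q.1 q.2) P)
    (hmeas : ∀ i j, Measurable (X i j)) {B : Set β} (hB : MeasurableSet B) :
    iIndepSet (fun i ↦ ⋂ j, X i j ⁻¹' B) P := by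
  refine (iIndepSet_iff_meas_biInter fun i ↦ .iInter fun j ↦ hmeas i j hB).2 fun S ↦ ?_
  simp_rw [hX.measure_biInter_iInter_preimage hB, hX.measure_iInter_preimage hB]

lemma iIndepFun.measureReal_ncard_inf'_gt_eq [IsProbabilityMeasure P] [Fintype ι]
    {X : ι → κ → Ω → ℝ} (hX : iIndepFun (fun q : ι × κ ↦ X q.1 q.2) P)
    (hmeas : ∀ i j, Measurable (X i j)) (hne : (Finset.univ : Finset κ).Nonempty) {s : ℝ} {q : I}
    (hq : ∀ i j, P.real {ω | s < X i j ω} = q) (k : ℕ) :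
    P.real {ω | {i | s < Finset.univ.inf' hne fun j ↦ X i j ω}.ncard = k} =
      (Fintype.card ι).choose k * (q ^ Fintype.card κ) ^ k *
        (1 - q ^ Fintype.card κ) ^ (Fintype.card ι - k) := by
  have hrow : ∀ i, P.real (⋂ j, X i j ⁻¹' Set.Ioi s) = (q ^ Fintype.card κ : I) := fun i ↦ by
    rw [measureReal_def, hX.measure_iInter_preimage measurableSet_Ioi, ENNReal.toReal_prod]
    simp_rw [← measureReal_def]
    simp [Set.preimage, hq]
  have hcount : ∀ ω, {i | s < Finset.univ.inf' hne fun j ↦ X i j ω} =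
      {i | ω ∈ ⋂ j, X i j ⁻¹' Set.Ioi s} := fun ω ↦ by
    ext i; simp [Finset.lt_inf'_iff]
  simp_rw [hcount, (hX.iIndepSet_iInter_preimage hmeas measurableSet_Ioi).measureReal_ncard_eq
    (fun i ↦ .iInter fun j ↦ hmeas i j measurableSet_Ioi) hrow k, Nat.card_eq_fintype_card]
  push_cast
  rfl

end ProbabilityTheory

theorem row_minima_count_poisson_limit_general
    {Ω : Type*} [MeasurableSpace Ω] (P : Measure Ω) [IsProbabilityMeasure P]
    (F : ℝ → ℝ) (tstar fstar : ℝ)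
    (h1 : F tstar < 1)
    (hd : HasDerivAt F fstar tstar)
    (c l : ℕ → ℕ) (hcpos : ∀ n, 0 < c n) (hlpos : ∀ n, 0 < l n)
    (hc : Tendsto c atTop atTop) (hl : Tendsto l atTop atTop)
    (hcouple : Tendsto (fun n => (c n : ℝ) * (1 - F tstar) ^ l n) atTop (nhds 1))
    (T : (n : ℕ) → Fin (c n) → Fin (l n) → Ω → ℝ)
    (hmeas : ∀ n i j, Measurable (T n i j))
    (hindep : ∀ n, iIndepFun
      (fun p : Fin (c n) × Fin (l n) => T n p.1 p.2) P)
    (hF : ∀ n i j t, (P {ω | T n i j ω ≤ t}).toReal = F t)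
    (t : ℝ) (k : ℕ) :
    Tendsto
      (fun n => (P {ω | Set.ncard {i : Fin (c n) | tstar + t / l n <
          Finset.univ.inf' (Finset.univ_nonempty_iff.mpr (Fin.pos_iff_nonempty.mp (hlpos n)))
            fun j => T n i j ω} = k}).toReal)
      atTop
      (nhds (Real.exp (-Real.exp (-(fstar / (1 - F tstar)) * t)) *
        Real.exp (-(fstar / (1 - F tstar)) * t) ^ k / Nat.factorial k)) := by
  have hF_mem : ∀ x, F x ∈ I := fun x ↦ by
    rw [← hF 0 ⟨0, hcpos 0⟩ ⟨0, hlpos 0⟩ x]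
    exact ⟨measureReal_nonneg, measureReal_le_one⟩
  let q : ℕ → I := fun n ↦ σ ⟨F (tstar + t / l n), hF_mem _⟩
  have hq : ∀ n i j, P.real {ω | tstar + t / l n < T n i j ω} = q n := fun n i j ↦ by
    have hcompl : {ω | tstar + t / l n < T n i j ω} = {ω | T n i j ω ≤ tstar + t / l n}ᶜ := by
      ext; simp
    rw [hcompl, probReal_compl_eq_one_sub (measurableSet_le (hmeas n i j) measurable_const)]
    simp [q, measureReal_def, hF]
  have hlim : Tendsto (fun n ↦ (c n : ℝ) * (q n : ℝ) ^ l n) atTop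
      (𝓝 (Real.exp (-(fstar / (1 - F tstar)) * t))) := by
    have hratio := (hd.const_sub 1).tendsto_div_pow_exp_s8 (sub_ne_zero.2 h1.ne') hl t
    rw [neg_div] at hratio
    refine (one_mul (Real.exp _) ▸ hcouple.mul hratio).congr fun n ↦ ?_
    rw [mul_assoc, ← mul_pow, mul_div_cancel₀ _ (sub_ne_zero.2 h1.ne')]
    rfl
  refine (tendsto_choose_mul_pow_of_tendsto_natCast_mul k hc hlim).congr fun n ↦ ?_
  rw [← measureReal_def, (hindep n).measureReal_ncard_inf'_gt_eq (hmeas n) _ (hq n)]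
  simp

/-- Poisson limit for the number of scaled row minima exceeding a level: for
`cₙ × lₙ` matrices of i.i.d. entries with distribution function `F`
differentiable at `t*` (`0 < F t* < 1`, `f t* > 0`), under the geometric
coupling `cₙ (1 - F t*)^{lₙ} → 1`, the number `Nₙ` of rows `i` whose minimum
exceeds `t* + t/lₙ` satisfies `P(Nₙ = k) → e^{-λ} λ^k / k!` with
`λ = exp (-ε̄ t)`, `ε̄ = f t*/(1 - F t*)`. -/
theorem row_minima_count_poisson_limit
    {Ω : Type*} [MeasurableSpace Ω] (P : Measure Ω) [IsProbabilityMeasure P]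
    (F : ℝ → ℝ) (tstar fstar : ℝ)
    (h0 : 0 < F tstar) (h1 : F tstar < 1) (hf : 0 < fstar)
    (hd : HasDerivAt F fstar tstar)
    (c l : ℕ → ℕ) (hcpos : ∀ n, 0 < c n) (hlpos : ∀ n, 0 < l n)
    (hc : Tendsto c atTop atTop) (hl : Tendsto l atTop atTop)
    (hcouple : Tendsto (fun n => (c n : ℝ) * (1 - F tstar) ^ l n) atTop (nhds 1))
    (T : (n : ℕ) → Fin (c n) → Fin (l n) → Ω → ℝ)
    (hmeas : ∀ n i j, Measurable (T n i j))
    (hindep : ∀ n, iIndepFun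
      (fun p : Fin (c n) × Fin (l n) => T n p.1 p.2) P)
    (hF : ∀ n i j t, (P {ω | T n i j ω ≤ t}).toReal = F t)
    (t : ℝ) (k : ℕ) :
    Tendsto
      (fun n => (P {ω | Set.ncard {i : Fin (c n) | tstar + t / l n <
          Finset.univ.inf' (Finset.univ_nonempty_iff.mpr (Fin.pos_iff_nonempty.mp (hlpos n)))
            fun j => T n i j ω} = k}).toReal)
      atTop
      (nhds (Real.exp (-Real.exp (-(fstar / (1 - F tstar)) * t)) *
        Real.exp (-(fstar / (1 - F tstar)) * t) ^ k / Nat.factorial k)) :=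
  row_minima_count_poisson_limit_general P F tstar fstar h1 hd c l hcpos hlpos hc hl hcouple T hmeas
    hindep hF t k
end
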